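/- Under the corner construction, the central angle of the turning arc equals π − α; that is, the angle ∠ q₁ c q₂ at the center c between the two tangent points equals π − α. (Consequently the arc of the smoothing circle between q₁ and q₂ has length r·(π − α).) -/

import Mathlib

/-!
For unit edge vectors `u₁, u₂` at angle `α` one has `‖u₁ + u₂‖ = 2 cos (α/2)`, so the half-angle
formulas turn `q₁ - c` into `(r / sin α) • (cos α • u₁ - u₂)`, and symmetrically for `q₂ - c`.
The vectors `cos α • u₁ - u₂` and `cos α • u₂ - u₁` have length `sin α` and inner product
`-cos α sin² α`, so the angle between them is `arccos (-cos α) = π - α`.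
-/

open InnerProductGeometry Real RealInnerProductSpace

lemma div_tan_half_eq_div_sin_mul_one_add_cos (r : ℝ) {θ : ℝ} (hθ : cos (θ / 2) ≠ 0) :
    r / tan (θ / 2) = r / sin θ * (1 + cos θ) := by
  have hsin := sin_two_mul (θ / 2)
  have hcos := cos_sq (θ / 2)
  rw [mul_div_cancel₀ _ two_ne_zero] at hsin hcos
  rw [tan_eq_sin_div_cos, hsin, show 1 + cos θ = 2 * cos (θ / 2) ^ 2 by linarith]
  field_simp

lemma div_sin_half_mul_inv_two_mul_cos_half (r θ : ℝ) :
    r / sin (θ / 2) * (2 * cos (θ / 2))⁻¹ = r / sin θ := by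
  have hsin := sin_two_mul (θ / 2)
  rw [mul_div_cancel₀ _ two_ne_zero] at hsin
  rw [hsin]
  ring

section
variable {V : Type*} [NormedAddCommGroup V] [InnerProductSpace ℝ V]

lemma real_inner_eq_cos_angle_of_norm_eq_one {x y : V} (hx : ‖x‖ = 1) (hy : ‖y‖ = 1) :
    ⟪x, y⟫ = cos (angle x y) := by
  rw [← cos_angle_mul_norm_mul_norm, hx, hy, mul_one, mul_one]

lemma angle_inv_norm_smul_inv_norm_smul {x y : V} (hx : x ≠ 0) (hy : y ≠ 0) :
    angle (‖x‖⁻¹ • x) (‖y‖⁻¹ • y) = angle x y := by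
  rw [angle_smul_left_of_pos _ _ (by positivity), angle_smul_right_of_pos _ _ (by positivity)]

lemma cos_half_angle_nonneg (x y : V) : 0 ≤ cos (angle x y / 2) :=
  cos_nonneg_of_mem_Icc ⟨by linarith [angle_nonneg x y, pi_pos], by linarith [angle_le_pi x y]⟩

lemma norm_add_eq_two_mul_cos_half_angle {x y : V} (hx : ‖x‖ = 1) (hy : ‖y‖ = 1) :
    ‖x + y‖ = 2 * cos (angle x y / 2) := by
  have hcos := cos_sq (angle x y / 2)
  rw [mul_div_cancel₀ _ two_ne_zero] at hcos
  refine (pow_left_inj₀ (norm_nonneg _) (by linarith [cos_half_angle_nonneg x y])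
    two_ne_zero).mp ?_
  rw [norm_add_sq_real, hx, hy, real_inner_eq_cos_angle_of_norm_eq_one hx hy]
  linear_combination (-4) * hcos

lemma norm_cos_angle_smul_sub {x y : V} (hx : ‖x‖ = 1) (hy : ‖y‖ = 1) :
    ‖cos (angle x y) • x - y‖ = sin (angle x y) := by
  refine (pow_left_inj₀ (norm_nonneg _) (sin_angle_nonneg x y) two_ne_zero).mp ?_
  rw [norm_sub_sq_real, norm_smul, real_inner_smul_left, Real.norm_eq_abs, hx, hy,
    real_inner_eq_cos_angle_of_norm_eq_one hx hy]
  linear_combination abs_mul_abs_self (cos (angle x y)) - sin_sq_add_cos_sq (angle x y)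

lemma real_inner_cos_angle_smul_sub {x y : V} (hx : ‖x‖ = 1) (hy : ‖y‖ = 1) :
    ⟪cos (angle x y) • x - y, cos (angle x y) • y - x⟫ =
      -(cos (angle x y) * sin (angle x y) ^ 2) := by
  have hxy := real_inner_eq_cos_angle_of_norm_eq_one hx hy
  rw [inner_sub_left, inner_sub_right, inner_sub_right, real_inner_smul_left,
    real_inner_smul_left, real_inner_smul_right, real_inner_smul_right, real_inner_comm x y,
    hxy, real_inner_self_eq_norm_sq, real_inner_self_eq_norm_sq, hx, hy]
  linear_combination cos (angle x y) * sin_sq_add_cos_sq (angle x y)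

lemma angle_cos_angle_smul_sub {x y : V} (hx : ‖x‖ = 1) (hy : ‖y‖ = 1)
    (h0 : 0 < angle x y) (hπ : angle x y < π) :
    angle (cos (angle x y) • x - y) (cos (angle x y) • y - x) = π - angle x y := by
  have hsin : sin (angle x y) ≠ 0 := (sin_pos_of_pos_of_lt_pi h0 hπ).ne'
  rw [angle, real_inner_cos_angle_smul_sub hx hy, norm_cos_angle_smul_sub hx hy,
    angle_comm x y, norm_cos_angle_smul_sub hy hx, angle_comm y x,
    show -(cos (angle x y) * sin (angle x y) ^ 2) / (sin (angle x y) * sin (angle x y))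
      = -cos (angle x y) by field_simp, arccos_neg, arccos_cos h0.le hπ.le]

lemma tangent_point_sub_center_eq {x y : V} (hx : ‖x‖ = 1) (hy : ‖y‖ = 1)
    (hπ : angle x y < π) (r : ℝ) :
    (r / tan (angle x y / 2)) • x - (r / sin (angle x y / 2)) • (‖x + y‖⁻¹ • (x + y)) =
      (r / sin (angle x y)) • (cos (angle x y) • x - y) := by
  have hcos : cos (angle x y / 2) ≠ 0 :=
    (cos_pos_of_mem_Ioo ⟨by linarith [angle_nonneg x y, pi_pos], by linarith⟩).ne'
  rw [norm_add_eq_two_mul_cos_half_angle hx hy, smul_smul,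
    div_sin_half_mul_inv_two_mul_cos_half, div_tan_half_eq_div_sin_mul_one_add_cos r hcos]
  module

end

theorem corner_central_angle_eq_pi_sub_general
    (p_i p_m p_f : EuclideanSpace ℝ (Fin 2))
    (hpi : p_i ≠ p_m) (hpf : p_f ≠ p_m)
    (α : ℝ) (hα : α = EuclideanGeometry.angle p_i p_m p_f)
    (hα0 : 0 < α) (hαπ : α < Real.pi)
    (r : ℝ) (hr : 0 < r)
    (u₁ u₂ : EuclideanSpace ℝ (Fin 2))
    (hu₁ : u₁ = ‖p_i - p_m‖⁻¹ • (p_i - p_m))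
    (hu₂ : u₂ = ‖p_f - p_m‖⁻¹ • (p_f - p_m))
    (l d : ℝ) (hl : l = r / Real.tan (α / 2)) (hd : d = r / Real.sin (α / 2))
    (b : EuclideanSpace ℝ (Fin 2)) (hb : b = ‖u₁ + u₂‖⁻¹ • (u₁ + u₂))
    (c : EuclideanSpace ℝ (Fin 2)) (hc : c = p_m + d • b)
    (q₁ q₂ : EuclideanSpace ℝ (Fin 2))
    (hq₁ : q₁ = p_m + l • u₁) (hq₂ : q₂ = p_m + l • u₂) :
    EuclideanGeometry.angle q₁ c q₂ = Real.pi - α := by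
  have hv : p_i - p_m ≠ 0 := sub_ne_zero.mpr hpi
  have hw : p_f - p_m ≠ 0 := sub_ne_zero.mpr hpf
  have hu₁1 : ‖u₁‖ = 1 := hu₁ ▸ norm_smul_inv_norm hv
  have hu₂1 : ‖u₂‖ = 1 := hu₂ ▸ norm_smul_inv_norm hw
  obtain rfl : α = angle u₁ u₂ := by
    rw [hα, hu₁, hu₂, angle_inv_norm_smul_inv_norm_smul hv hw]
    rfl
  have hq₁c : q₁ - c = (r / sin (angle u₁ u₂)) • (cos (angle u₁ u₂) • u₁ - u₂) := by
    rw [hq₁, hc, add_sub_add_left_eq_sub, hl, hd, hb, tangent_point_sub_center_eq hu₁1 hu₂1 hαπ]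
  have hq₂c : q₂ - c = (r / sin (angle u₁ u₂)) • (cos (angle u₁ u₂) • u₂ - u₁) := by
    rw [hq₂, hc, add_sub_add_left_eq_sub, hl, hd, hb, add_comm u₁ u₂, angle_comm,
      tangent_point_sub_center_eq hu₂1 hu₁1 (angle_comm u₁ u₂ ▸ hαπ)]
  have hk : r / sin (angle u₁ u₂) ≠ 0 :=
    div_ne_zero hr.ne' (sin_pos_of_pos_of_lt_pi hα0 hαπ).ne'
  rw [EuclideanGeometry.angle, vsub_eq_sub, vsub_eq_sub, hq₁c, hq₂c, angle_smul_smul hk,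
    angle_cos_angle_smul_sub hu₁1 hu₂1 hα0 hαπ]

/-- under the corner construction, the central angle of the turning arc equals
`π − α`, i.e. `∠ q₁ c q₂ = π − α`. -/
theorem corner_central_angle_eq_pi_sub
    (p_i p_m p_f : EuclideanSpace ℝ (Fin 2))
    (hpi : p_i ≠ p_m) (hpf : p_f ≠ p_m)
    (hncol : ¬ Collinear ℝ ({p_i, p_m, p_f} : Set (EuclideanSpace ℝ (Fin 2))))
    (α : ℝ) (hα : α = EuclideanGeometry.angle p_i p_m p_f)
    (hα0 : 0 < α) (hαπ : α < Real.pi)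
    (r : ℝ) (hr : 0 < r)
    (u₁ u₂ : EuclideanSpace ℝ (Fin 2))
    (hu₁ : u₁ = ‖p_i - p_m‖⁻¹ • (p_i - p_m))
    (hu₂ : u₂ = ‖p_f - p_m‖⁻¹ • (p_f - p_m))
    (l d : ℝ) (hl : l = r / Real.tan (α / 2)) (hd : d = r / Real.sin (α / 2))
    (b : EuclideanSpace ℝ (Fin 2)) (hb : b = ‖u₁ + u₂‖⁻¹ • (u₁ + u₂))
    (c : EuclideanSpace ℝ (Fin 2)) (hc : c = p_m + d • b)
    (q₁ q₂ : EuclideanSpace ℝ (Fin 2))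
    (hq₁ : q₁ = p_m + l • u₁) (hq₂ : q₂ = p_m + l • u₂) :
    EuclideanGeometry.angle q₁ c q₂ = Real.pi - α :=
  corner_central_angle_eq_pi_sub_general p_i p_m p_f hpi hpf α hα hα0 hαπ r hr u₁ u₂ hu₁ hu₂ l d hl
    hd b hb c hc q₁ q₂ hq₁ hq₂
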